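/- Let g : ℝ^m → ℝ be μ_g-strongly convex and L_g-smooth with 0 < μ_g ≤ L_g, and let A ∈ ℝ^{m×n} have full column rank, i.e., μ_A = λ_min(AᵀA) > 0. Let f : ℝ^n → ℝ ∪ {∞} be proper, convex, closed. Then the saddle-point operator F(x,y) = (∂f(x)+Aᵀy, ∇g(y)-Ax) is (1/R₂)-inverse Lipschitz for some R₂ > 0; i.e., there exists c > 0 such that ‖v-v'‖ ≥ c‖(x,y)-(x',y')‖ whenever v ∈ F(x,y), v' ∈ F(x',y'). -/

import Mathlib

noncomputable section
open Matrix

abbrev Evec (n : ℕ) := EuclideanSpace ℝ (Fin n)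

noncomputable def qform {ι : Type*} [Fintype ι] [DecidableEq ι]
    (M : Matrix ι ι ℝ) (v : EuclideanSpace ℝ ι) : ℝ :=
  inner ℝ (Matrix.toEuclideanLin M v) v

/-- The smallest eigenvalue of a symmetric matrix, via the Rayleigh quotient. -/
noncomputable def lambdaMin {ι : Type*} [Fintype ι] [DecidableEq ι]
    (M : Matrix ι ι ℝ) : ℝ :=
  ⨅ v : Metric.sphere (0 : EuclideanSpace ℝ ι) 1, qform M (v : EuclideanSpace ℝ ι)

/-- The convex subdifferential of an extended-real-valued function. -/
def subdiff {n : ℕ} (f : Evec n → EReal) (x : Evec n) : Set (Evec n) :=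
  {v | ∀ z, f x + (((inner ℝ v (z - x) : ℝ)) : EReal) ≤ f z}

/-! The skew part `(x, y) ↦ (Aᵀy, -Ax)` of the saddle operator drops out of
`⟪F ω - F ω', ω - ω'⟫`, so monotonicity of `∂f` and strong convexity of `g` give
`μ_g ‖Δy‖² ≤ ‖r₁‖‖Δx‖ + ‖r₂‖‖Δy‖` for the residuals `r₁, r₂`. The second residual also reads
`A Δx = (∇g y - ∇g y') - r₂`, so full column rank and smoothness of `g` give
`√μ_A ‖Δx‖ ≤ L_g ‖Δy‖ + ‖r₂‖`. These two scalar inequalities bound `‖Δx‖` and `‖Δy‖` linearly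
by `√(‖r₁‖² + ‖r₂‖²)`. -/

theorem inner_toEuclideanLin_transpose {ι κ : Type*} [Fintype ι] [Fintype κ]
    [DecidableEq ι] [DecidableEq κ] (A : Matrix ι κ ℝ) (u : EuclideanSpace ℝ ι)
    (v : EuclideanSpace ℝ κ) :
    inner ℝ (Matrix.toEuclideanLin Aᵀ u) v = inner ℝ u (Matrix.toEuclideanLin A v) := by
  rw [← conjTranspose_eq_transpose_of_trivial, toEuclideanLin_conjTranspose_eq_adjoint,
    LinearMap.adjoint_inner_left]

theorem qform_transpose_mul_self {ι κ : Type*} [Fintype ι] [Fintype κ]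
    [DecidableEq ι] [DecidableEq κ] (A : Matrix ι κ ℝ) (v : EuclideanSpace ℝ κ) :
    qform (Aᵀ * A) v = ‖Matrix.toEuclideanLin A v‖ ^ 2 := by
  rw [qform, toLpLin_mul_same, LinearMap.comp_apply, inner_toEuclideanLin_transpose,
    real_inner_self_eq_norm_sq]

theorem qform_smul {ι : Type*} [Fintype ι] [DecidableEq ι]
    (M : Matrix ι ι ℝ) (c : ℝ) (v : EuclideanSpace ℝ ι) :
    qform M (c • v) = c ^ 2 * qform M v := by
  simp only [qform, map_smul, real_inner_smul_left, real_inner_smul_right]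
  ring

theorem lambdaMin_le_qform {ι : Type*} [Fintype ι] [DecidableEq ι] (M : Matrix ι ι ℝ)
    (w : Metric.sphere (0 : EuclideanSpace ℝ ι) 1) : lambdaMin M ≤ qform M w := by
  have hcont : Continuous fun v : EuclideanSpace ℝ ι => qform M v :=
    (LinearMap.continuous_of_finiteDimensional _).inner continuous_id
  exact ciInf_le (isCompact_range (hcont.comp continuous_subtype_val)).bddBelow w

theorem lambdaMin_mul_norm_sq_le_qform {ι : Type*} [Fintype ι] [DecidableEq ι]
    (M : Matrix ι ι ℝ) (v : EuclideanSpace ℝ ι) :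
    lambdaMin M * ‖v‖ ^ 2 ≤ qform M v := by
  rcases eq_or_ne v 0 with rfl | hv
  · simp [qform]
  have hnorm : 0 < ‖v‖ := norm_pos_iff.mpr hv
  have hunit : ‖v‖⁻¹ • v ∈ Metric.sphere (0 : EuclideanSpace ℝ ι) 1 := by
    simp [norm_smul, hnorm.ne']
  have h := lambdaMin_le_qform M ⟨_, hunit⟩
  rw [qform_smul, inv_pow, inv_mul_eq_div, le_div_iff₀ (by positivity)] at h
  exact h

theorem sqrt_lambdaMin_mul_norm_le {ι κ : Type*} [Fintype ι] [Fintype κ]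
    [DecidableEq ι] [DecidableEq κ] (A : Matrix ι κ ℝ) (v : EuclideanSpace ℝ κ) :
    √(lambdaMin (Aᵀ * A)) * ‖v‖ ≤ ‖Matrix.toEuclideanLin A v‖ := by
  have h := lambdaMin_mul_norm_sq_le_qform (Aᵀ * A) v
  rw [qform_transpose_mul_self] at h
  calc √(lambdaMin (Aᵀ * A)) * ‖v‖ = √(lambdaMin (Aᵀ * A) * ‖v‖ ^ 2) := by
        rw [Real.sqrt_mul' _ (by positivity), Real.sqrt_sq (norm_nonneg v)]
    _ ≤ √(‖Matrix.toEuclideanLin A v‖ ^ 2) := Real.sqrt_le_sqrt h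
    _ = ‖Matrix.toEuclideanLin A v‖ := Real.sqrt_sq (norm_nonneg _)

theorem ne_top_of_mem_subdiff {n : ℕ} {f : Evec n → EReal} {x v : Evec n}
    (hf : ∃ z, f z ≠ ⊤) (hv : v ∈ subdiff f x) : f x ≠ ⊤ := by
  obtain ⟨z, hz⟩ := hf
  intro hx
  have h := hv z
  rw [hx, EReal.top_add_of_ne_bot (EReal.coe_ne_bot _), top_le_iff] at h
  exact hz h

theorem inner_sub_nonneg_of_mem_subdiff {n : ℕ} {f : Evec n → EReal}
    (hbot : ∀ x, f x ≠ ⊥) (htop : ∃ x, f x ≠ ⊤) {x x' v v' : Evec n}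
    (hv : v ∈ subdiff f x) (hv' : v' ∈ subdiff f x') :
    0 ≤ inner ℝ (v - v') (x - x') := by
  have hx := EReal.coe_toReal (ne_top_of_mem_subdiff htop hv) (hbot x)
  have hx' := EReal.coe_toReal (ne_top_of_mem_subdiff htop hv') (hbot x')
  have h := hv x'
  have h' := hv' x
  rw [← hx, ← hx', ← EReal.coe_add, EReal.coe_le_coe_iff] at h h'
  have hswap : x' - x = -(x - x') := (neg_sub _ _).symm
  rw [hswap, inner_neg_right] at h
  rw [inner_sub_left]
  linarith

theorem inner_add_transpose_add_inner_sub {ι κ : Type*} [Fintype ι] [Fintype κ]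
    [DecidableEq ι] [DecidableEq κ] (A : Matrix ι κ ℝ) (u dx : EuclideanSpace ℝ κ)
    (w dy : EuclideanSpace ℝ ι) :
    inner ℝ (u + Matrix.toEuclideanLin Aᵀ dy) dx + inner ℝ (w - Matrix.toEuclideanLin A dx) dy
      = inner ℝ u dx + inner ℝ w dy := by
  rw [inner_add_left, inner_sub_left, inner_toEuclideanLin_transpose,
    real_inner_comm dy (Matrix.toEuclideanLin A dx)]
  ring

theorem le_mul_of_saddle_inequalities {μ L r N p q : ℝ} (hμ : 0 < μ) (hL : 0 ≤ L) (hr : 0 < r)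
    (hN : 0 ≤ N) (hdual : μ * q ^ 2 ≤ N * p + N * q) (hprimal : r * p ≤ L * q + N) :
    q ≤ (1 + (L + 1 + r) / (μ * r)) * N ∧
      p ≤ (L * (1 + (L + 1 + r) / (μ * r)) + 1) / r * N := by
  have hμr : 0 < μ * r := mul_pos hμ hr
  have hq_le : q ≤ (1 + (L + 1 + r) / (μ * r)) * N := by
    have hratio : 0 ≤ (L + 1 + r) / (μ * r) := by positivity
    rcases le_or_gt q N with hqN | hNq
    · nlinarith
    -- once `q > N`, the `N ^ 2` that `hprimal` contributes is absorbed by `N * q`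
    have hsq : μ * r * q ^ 2 ≤ (L + 1 + r) * N * q := by
      nlinarith [mul_le_mul_of_nonneg_left hprimal hN, mul_le_mul_of_nonneg_left hNq.le hN]
    have hlin : q ≤ (L + 1 + r) / (μ * r) * N := by
      rw [div_mul_eq_mul_div, le_div_iff₀ hμr]
      nlinarith [hN.trans_lt hNq]
    nlinarith
  refine ⟨hq_le, ?_⟩
  rw [div_mul_eq_mul_div, le_div_iff₀ hr]
  nlinarith [mul_le_mul_of_nonneg_left hq_le hL]

theorem exists_sqrt_sq_add_sq_le_of_saddle_inequalities {μ L r : ℝ} (hμ : 0 < μ) (hL : 0 ≤ L)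
    (hr : 0 < r) :
    ∃ C > 0, ∀ p q s t : ℝ, 0 ≤ p → 0 ≤ q → 0 ≤ s → 0 ≤ t →
      μ * q ^ 2 ≤ s * p + t * q → r * p ≤ L * q + t → √(p ^ 2 + q ^ 2) ≤ C * √(s ^ 2 + t ^ 2) := by
  set a := 1 + (L + 1 + r) / (μ * r)
  set b := (L * a + 1) / r
  have ha : 0 < a := by positivity
  refine ⟨√(b ^ 2 + a ^ 2), by positivity, fun p q s t hp hq hs ht hdual hprimal => ?_⟩
  set N := √(s ^ 2 + t ^ 2)
  have hsN : s ≤ N := Real.le_sqrt_of_sq_le (by nlinarith)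
  have htN : t ≤ N := Real.le_sqrt_of_sq_le (by nlinarith)
  have hN : 0 ≤ N := Real.sqrt_nonneg _
  obtain ⟨hqa, hpb⟩ := le_mul_of_saddle_inequalities hμ hL hr hN
    (hdual.trans (by nlinarith)) (hprimal.trans (by linarith))
  have hp2 := pow_le_pow_left₀ hp hpb 2
  have hq2 := pow_le_pow_left₀ hq hqa 2
  rw [← Real.sqrt_sq hN, ← Real.sqrt_mul (by positivity)]
  exact Real.sqrt_le_sqrt (by linarith)

theorem saddle_operator_inverseLipschitz_C2_general
    (n m : ℕ) (μg Lg : ℝ) (hμg : 0 < μg) (hμLg : μg ≤ Lg)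
    (A : Matrix (Fin m) (Fin n) ℝ) (hA : 0 < lambdaMin (Aᵀ * A))
    (f : Evec n → EReal)
    (hproper : (∀ x, f x ≠ ⊥) ∧ ∃ x, f x ≠ ⊤)
    (g : Evec m → ℝ)
    (hg1 : ∀ y y', μg * ‖y - y'‖ ^ 2 ≤ (inner ℝ (gradient g y - gradient g y') (y - y') : ℝ))
    (hg2 : ∀ y y', ‖gradient g y - gradient g y'‖ ≤ Lg * ‖y - y'‖) :
    ∃ c > (0 : ℝ), ∀ x x' y y' vx vx', vx ∈ subdiff f x → vx' ∈ subdiff f x' →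
      c * Real.sqrt (‖x - x'‖ ^ 2 + ‖y - y'‖ ^ 2) ≤
        Real.sqrt (‖(vx + Matrix.toEuclideanLin Aᵀ y) - (vx' + Matrix.toEuclideanLin Aᵀ y')‖ ^ 2 +
          ‖(gradient g y - Matrix.toEuclideanLin A x) -
            (gradient g y' - Matrix.toEuclideanLin A x')‖ ^ 2) := by
  obtain ⟨C, hC, hbound⟩ := exists_sqrt_sq_add_sq_le_of_saddle_inequalities hμg
    (hμg.le.trans hμLg) (Real.sqrt_pos.mpr hA)
  refine ⟨C⁻¹, inv_pos.mpr hC, fun x x' y y' vx vx' hvx hvx' => ?_⟩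
  have hres_x : (vx + Matrix.toEuclideanLin Aᵀ y) - (vx' + Matrix.toEuclideanLin Aᵀ y')
      = (vx - vx') + Matrix.toEuclideanLin Aᵀ (y - y') := by rw [map_sub]; abel
  have hres_y : (gradient g y - Matrix.toEuclideanLin A x) -
      (gradient g y' - Matrix.toEuclideanLin A x')
      = (gradient g y - gradient g y') - Matrix.toEuclideanLin A (x - x') := by
    rw [map_sub]; abel
  set dG := gradient g y - gradient g y'
  rw [hres_x, hres_y, inv_mul_le_iff₀ hC]
  refine hbound _ _ _ _ (norm_nonneg _) (norm_nonneg _) (norm_nonneg _) (norm_nonneg _) ?_ ?_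
  · have hmono := inner_sub_nonneg_of_mem_subdiff hproper.1 hproper.2 hvx hvx'
    calc μg * ‖y - y'‖ ^ 2 ≤ inner ℝ (vx - vx') (x - x') + inner ℝ dG (y - y') := by
          linarith [hg1 y y']
      _ = inner ℝ ((vx - vx') + Matrix.toEuclideanLin Aᵀ (y - y')) (x - x')
          + inner ℝ (dG - Matrix.toEuclideanLin A (x - x')) (y - y') :=
        (inner_add_transpose_add_inner_sub A _ _ _ _).symm
      _ ≤ _ := add_le_add (real_inner_le_norm _ _) (real_inner_le_norm _ _)
  · calc √(lambdaMin (Aᵀ * A)) * ‖x - x'‖ ≤ ‖Matrix.toEuclideanLin A (x - x')‖ :=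
          sqrt_lambdaMin_mul_norm_le A _
      _ = ‖dG - (dG - Matrix.toEuclideanLin A (x - x'))‖ := by rw [sub_sub_cancel]
      _ ≤ ‖dG‖ + ‖dG - Matrix.toEuclideanLin A (x - x')‖ := norm_sub_le _ _
      _ ≤ _ := by linarith [hg2 y y']

/-- Under condition C2 (`g` strongly convex and smooth, `A` of full column rank),
the saddle-point operator `F(x,y) = (∂f(x) + Aᵀy, ∇g(y) - Ax)` is inverse Lipschitz:
there exists `c = 1/R₂ > 0` bounding `‖F(ω)-F(ω')‖` below by `c‖ω-ω'‖`. -/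
theorem saddle_operator_inverseLipschitz_C2
    (n m : ℕ) (μg Lg : ℝ) (hμg : 0 < μg) (hμLg : μg ≤ Lg)
    (A : Matrix (Fin m) (Fin n) ℝ) (hA : 0 < lambdaMin (Aᵀ * A))
    (f : Evec n → EReal)
    (hproper : (∀ x, f x ≠ ⊥) ∧ ∃ x, f x ≠ ⊤)
    (hconv : ∀ x y (t : ℝ), 0 ≤ t → t ≤ 1 →
      f (t • x + (1 - t) • y) ≤ (t : EReal) * f x + ((1 - t : ℝ) : EReal) * f y)
    (hclosed : LowerSemicontinuous f)
    (g : Evec m → ℝ)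
    (hdg : ∀ y, HasGradientAt g (gradient g y) y)
    (hg1 : ∀ y y', μg * ‖y - y'‖ ^ 2 ≤ (inner ℝ (gradient g y - gradient g y') (y - y') : ℝ))
    (hg2 : ∀ y y', ‖gradient g y - gradient g y'‖ ≤ Lg * ‖y - y'‖) :
    ∃ c > (0 : ℝ), ∀ x x' y y' vx vx', vx ∈ subdiff f x → vx' ∈ subdiff f x' →
      c * Real.sqrt (‖x - x'‖ ^ 2 + ‖y - y'‖ ^ 2) ≤
        Real.sqrt (‖(vx + Matrix.toEuclideanLin Aᵀ y) - (vx' + Matrix.toEuclideanLin Aᵀ y')‖ ^ 2 +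
          ‖(gradient g y - Matrix.toEuclideanLin A x) -
            (gradient g y' - Matrix.toEuclideanLin A x')‖ ^ 2) :=
  saddle_operator_inverseLipschitz_C2_general n m μg Lg hμg hμLg A hA f hproper g hg1 hg2
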